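/- arXiv:2407.12720 — 2 statements merged into one kernel-verified Lean document; each statement's English description precedes it below -/
import Mathlib

section
/- Let 𝔉 be a Fitting formation, let G be a finite group and let H/K be a chief factor of G such that the group H/K does not belong to 𝔉. Then the 𝔉-radical G_𝔉 of G centralizes H/K, i.e. G_𝔉 ≤ C_G(H/K); indeed HG_𝔉/K is the internal direct product of H/K and G_𝔉K/K. -/
/-!
By minimality of the chief factor, `H ∩ KR` is `K` or `H`. In the second case `H/K` is a normal
subgroup of `KR/K ≅ R/(R ∩ K)`, a quotient of `R ∈ 𝔉`, so `H/K ∈ 𝔉`. Hence `H ∩ KR = K`, and since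
`[R, H] ≤ H ∩ R ≤ K`, the radical centralizes `H/K`; the images of `H` and `R` in `G/K` then commute
and meet trivially.
-/

open scoped commutatorElement

/-- A class of groups: a property of a carrier type together with a group structure on it. -/
def GroupClass : Type 1 :=
  ∀ (G : Type), Group G → Prop

/-- `𝔛.In G` means that the group `G` belongs to the class of groups `𝔛`. -/
def GroupClass.In (𝔛 : GroupClass) (G : Type) [inst : Group G] : Prop :=
  𝔛 G inst

/-- A class of groups is closed under isomorphism. -/
def GroupClass.IsoClosed (𝔛 : GroupClass) : Prop :=
  ∀ (G : Type) [Group G] (H : Type) [Group H], Nonempty (G ≃* H) → 𝔛.In G → 𝔛.In H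

/-- A class of groups is non-empty if some (finite) group belongs to it. -/
def GroupClass.IsNonempty (𝔛 : GroupClass) : Prop :=
  ∃ (X : Type) (inst : Group X), Finite X ∧ 𝔛 X inst

/-- A formation (of finite groups): a class of groups closed under isomorphism,
taking quotients and subdirect products. -/
def IsFormation (𝔉 : GroupClass) : Prop :=
  𝔉.IsoClosed ∧
  (∀ (G : Type) [Group G] [Finite G] (N : Subgroup G) [N.Normal],
      𝔉.In G → 𝔉.In (G ⧸ N)) ∧
  (∀ (G : Type) [Group G] [Finite G] (N₁ N₂ : Subgroup G) [N₁.Normal] [N₂.Normal],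
      𝔉.In (G ⧸ N₁) → 𝔉.In (G ⧸ N₂) → 𝔉.In (G ⧸ (N₁ ⊓ N₂)))

/-- A Fitting class (of finite groups): a class of groups closed under isomorphism,
closed under taking normal subgroups, and closed under products of two normal subgroups
(for normal subgroups `N₁, N₂` the product `N₁N₂` is the join `N₁ ⊔ N₂`). -/
def IsFittingClass (𝔛 : GroupClass) : Prop :=
  𝔛.IsoClosed ∧
  (∀ (G : Type) [Group G] [Finite G] (N : Subgroup G), N.Normal → 𝔛.In G → 𝔛.In ↥N) ∧
  (∀ (G : Type) [Group G] [Finite G] (N₁ N₂ : Subgroup G), N₁.Normal → N₂.Normal →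
      𝔛.In ↥N₁ → 𝔛.In ↥N₂ → 𝔛.In ↥(N₁ ⊔ N₂))

/-- A Fitting formation: both a formation and a Fitting class. -/
def IsFittingFormation (𝔉 : GroupClass) : Prop :=
  IsFormation 𝔉 ∧ IsFittingClass 𝔉

/-- The centralizer `C_G(H/K) = {g ∈ G ∣ [g,h] ∈ K for all h ∈ H}` of a section `H/K`,
where `K` is a normal subgroup of `G`. -/
def sectionCentralizer {G : Type} [Group G] (H K : Subgroup G) [hK : K.Normal] :
    Subgroup G where
  carrier := {g | ∀ h ∈ H, ⁅g, h⁆ ∈ K}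
  one_mem' := by
    intro h _
    have e : ⁅(1 : G), h⁆ = 1 := by group
    rw [e]; exact K.one_mem
  mul_mem' := by
    intro a b ha hb h hh
    have e : ⁅a * b, h⁆ = (a * ⁅b, h⁆ * a⁻¹) * ⁅a, h⁆ := by group
    rw [e]; exact mul_mem (hK.conj_mem _ (hb h hh) a) (ha h hh)
  inv_mem' := by
    intro a ha h hh
    have e : ⁅a⁻¹, h⁆ = a⁻¹ * ⁅a, h⁆⁻¹ * (a⁻¹)⁻¹ := by group
    rw [e]; exact hK.conj_mem _ (inv_mem (ha h hh)) a⁻¹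

theorem mem_sectionCentralizer_iff {G : Type} [Group G] {H K : Subgroup G} [K.Normal]
    {g : G} : g ∈ sectionCentralizer H K ↔ ∀ h ∈ H, ⁅g, h⁆ ∈ K := Iff.rfl

/-- The centralizer of a section `H/K` with `H, K` normal in `G` is normal in `G`. -/
theorem sectionCentralizer_normal {G : Type} [Group G] (H K : Subgroup G)
    [hH : H.Normal] [hK : K.Normal] : (sectionCentralizer H K).Normal := by
  constructor
  intro x hx g h hh
  have e : ⁅g * x * g⁻¹, h⁆ = g * ⁅x, g⁻¹ * h * (g⁻¹)⁻¹⁆ * g⁻¹ := by group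
  rw [e]
  exact hK.conj_mem _ (hx _ (hH.conj_mem h hh g⁻¹)) g

/-- `𝔛.InSect H K` means that the section `H/K` (a group, since `K` is normal)
belongs to the class `𝔛`. -/
def GroupClass.InSect (𝔛 : GroupClass) {G : Type} [Group G] (H K : Subgroup G)
    [K.Normal] : Prop :=
  𝔛.In (↥H ⧸ K.subgroupOf H)

/-- `H/K` is a chief factor of `G`: both are normal in `G`, `K < H`, and there is no
normal subgroup of `G` strictly between `K` and `H`. -/
def IsChiefFactor {G : Type} [Group G] (H K : Subgroup G) [H.Normal] [K.Normal] : Prop :=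
  K < H ∧ ∀ L : Subgroup G, L.Normal → K ≤ L → L ≤ H → L = K ∨ L = H

/-- `R` is the `𝔛`-radical of `G`: the largest normal subgroup of `G` belonging to `𝔛`. -/
def GroupClass.IsRadical (𝔛 : GroupClass) {G : Type} [Group G] (R : Subgroup G) : Prop :=
  R.Normal ∧ 𝔛.In ↥R ∧ ∀ N : Subgroup G, N.Normal → 𝔛.In ↥N → N ≤ R

/-- A Baer function: an assignment of a class of groups to every group (thought of as
defined on simple groups and extended to their direct powers); the conditions of being
a genuine Baer function are stated in `IsBaerFunction`. -/
def BaerFunction : Type 1 :=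
  ∀ (J : Type), Group J → GroupClass

/-- The value of a Baer function on a group. -/
def BaerFunction.app (f : BaerFunction) (J : Type) [inst : Group J] : GroupClass :=
  f J inst

/-- The value of a Baer function on the section `H/K`. -/
def BaerFunction.atSection (f : BaerFunction) {G : Type} [Group G] (H K : Subgroup G)
    [K.Normal] : GroupClass :=
  f.app (↥H ⧸ K.subgroupOf H)

/-- `D` is a direct product of (finitely many, at least one) copies of `J`. -/
def IsDirectPowerOf (D : Type) [Group D] (J : Type) [Group J] : Prop :=
  ∃ n : ℕ, 0 < n ∧ Nonempty (D ≃* (Fin n → J))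

/-- `f` is a Baer function: its values depend only on the isomorphism class, its value on a
direct product of copies of a simple group `J` is its value on `J` ("type `J`"), and its
value on every (finite) simple group is a (possibly empty) formation. -/
structure IsBaerFunction (f : BaerFunction) : Prop where
  iso_invariant : ∀ (J₁ : Type) [Group J₁] (J₂ : Type) [Group J₂],
    Nonempty (J₁ ≃* J₂) → f.app J₁ = f.app J₂
  respects_type : ∀ (D : Type) [Group D] (J : Type) [Group J],
    IsSimpleGroup J → IsDirectPowerOf D J → f.app D = f.app J
  formation_valued : ∀ (J : Type) [Group J] [Finite J], IsSimpleGroup J →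
    IsFormation (f.app J)

/-- `𝔉` is the Baer-local formation defined by the Baer function `f`:
`𝔉 = {G ∣ G/C_G(H/K) ∈ f(H/K) for every chief factor H/K of G}`. -/
def DefinedByBaerFunction (𝔉 : GroupClass) (f : BaerFunction) : Prop :=
  ∀ (G : Type) [Group G] [Finite G],
    𝔉.In G ↔
      ∀ (H K : Subgroup G) [H.Normal] [K.Normal], IsChiefFactor H K →
        haveI : (sectionCentralizer H K).Normal := sectionCentralizer_normal H K
        (f.atSection H K).In (G ⧸ sectionCentralizer H K)

/-- `E𝔉` : the class of all groups possessing a normal series all of whose factors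
belong to `𝔉`. -/
def EClass (𝔉 : GroupClass) : GroupClass := fun G iG =>
  haveI := iG
  ∃ (m : ℕ) (c : Fin (m + 1) → Subgroup G),
    c 0 = ⊥ ∧ c (Fin.last m) = ⊤ ∧
    ∀ i : Fin m, c i.castSucc ≤ c i.succ ∧
      ∃ _ : ((c i.castSucc).subgroupOf (c i.succ)).Normal,
        𝔉.In (↥(c i.succ) ⧸ (c i.castSucc).subgroupOf (c i.succ))


namespace Subgroup

variable {G : Type} [Group G]

/-- Second isomorphism theorem in the form `A/(K ∩ A) ≅ AK/K`. -/
noncomputable def quotientSubgroupOfEquivMapMk (K A : Subgroup G) [K.Normal] :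
    (↥A ⧸ K.subgroupOf A) ≃* ↥(A.map (QuotientGroup.mk' K)) := by
  have hker : ((QuotientGroup.mk' K).comp A.subtype).ker = K.subgroupOf A := by
    ext x
    simp [MonoidHom.mem_ker, QuotientGroup.eq_one_iff, mem_subgroupOf]
  have hrange : ((QuotientGroup.mk' K).comp A.subtype).range = A.map (QuotientGroup.mk' K) := by
    rw [MonoidHom.range_comp, range_subtype]
  exact (QuotientGroup.quotientMulEquivOfEq hker.symm).trans
    ((QuotientGroup.quotientKerEquivRange _).trans (MulEquiv.subgroupCongr hrange))

theorem map_mk_inf_map_mk_eq_bot {H K R : Subgroup G} [K.Normal] (hKH : K ≤ H)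
    (h : H ⊓ (K ⊔ R) = K) :
    H.map (QuotientGroup.mk' K) ⊓ R.map (QuotientGroup.mk' K) = ⊥ := by
  apply comap_injective (QuotientGroup.mk'_surjective K)
  rw [comap_inf, comap_map_eq, comap_map_eq, MonoidHom.comap_bot, QuotientGroup.ker_mk',
    sup_eq_left.mpr hKH, sup_comm R, h]

theorem commute_of_mem_map_mk_of_le_sectionCentralizer {H K R : Subgroup G} [K.Normal]
    (hR : R ≤ sectionCentralizer H K) {x y : G ⧸ K} (hx : x ∈ H.map (QuotientGroup.mk' K))
    (hy : y ∈ R.map (QuotientGroup.mk' K)) : Commute x y := by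
  obtain ⟨h, hh, rfl⟩ := hx
  obtain ⟨r, hr, rfl⟩ := hy
  refine (commutatorElement_eq_one_iff_commute.mp ?_).symm
  rw [← map_commutatorElement, QuotientGroup.mk'_apply, QuotientGroup.eq_one_iff]
  exact hR hr h hh

theorem le_sectionCentralizer_iff {H K A : Subgroup G} [K.Normal] :
    A ≤ sectionCentralizer H K ↔ ⁅A, H⁆ ≤ K := by
  rw [commutator_le]
  rfl

end Subgroup

open Subgroup

theorem IsFormation.in_map_mk {𝔉 : GroupClass} (h𝔉 : IsFormation 𝔉) {G : Type} [Group G]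
    [Finite G] (K A : Subgroup G) [K.Normal] (hA : 𝔉.In A) :
    𝔉.In (A.map (QuotientGroup.mk' K)) :=
  h𝔉.1 _ _ ⟨quotientSubgroupOfEquivMapMk K A⟩ (h𝔉.2.1 A (K.subgroupOf A) hA)

theorem IsFittingClass.in_of_le_of_normal {𝔛 : GroupClass} (h𝔛 : IsFittingClass 𝔛)
    {G : Type} [Group G] [Finite G] {N M : Subgroup G} [N.Normal] (hNM : N ≤ M) (hM : 𝔛.In M) :
    𝔛.In N :=
  h𝔛.1 _ _ ⟨subgroupOfEquivOfLe hNM⟩ (h𝔛.2.1 M (N.subgroupOf M) inferInstance hM)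

theorem IsFittingFormation.inf_sup_eq_of_not_inSect {𝔉 : GroupClass}
    (h𝔉 : IsFittingFormation 𝔉) {G : Type} [Group G] [Finite G] {H K R : Subgroup G}
    [hH : H.Normal] [K.Normal] [R.Normal] (hcf : IsChiefFactor H K) (hnot : ¬ 𝔉.InSect H K)
    (hR : 𝔉.In R) : H ⊓ (K ⊔ R) = K := by
  refine (hcf.2 _ inferInstance (le_inf hcf.1.le le_sup_left) inf_le_left).resolve_right ?_
  intro hHKR
  have hHR : H.map (QuotientGroup.mk' K) ≤ R.map (QuotientGroup.mk' K) := by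
    calc H.map (QuotientGroup.mk' K) ≤ (K ⊔ R).map (QuotientGroup.mk' K) :=
          map_mono (hHKR ▸ inf_le_right)
      _ = R.map (QuotientGroup.mk' K) := by
          rw [Subgroup.map_sup, (map_eq_bot_iff K).mpr (QuotientGroup.ker_mk' K).ge, bot_sup_eq]
  have : (H.map (QuotientGroup.mk' K)).Normal := hH.map _ (QuotientGroup.mk'_surjective K)
  have hHbar := h𝔉.2.in_of_le_of_normal hHR (h𝔉.1.in_map_mk K R hR)
  exact hnot (h𝔉.1.1 _ _ ⟨(quotientSubgroupOfEquivMapMk K H).symm⟩ hHbar)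

/-- Let `𝔉` be a Fitting formation and `H/K` a chief factor of the finite
group `G` with `H/K ∉ 𝔉`.  Then the `𝔉`-radical `R = G_𝔉` satisfies `R ≤ C_G(H/K)`;
indeed `HR/K` is the internal direct product of `H/K` and `RK/K`. -/
theorem statement_2 (𝔉 : GroupClass) (h𝔉 : IsFittingFormation 𝔉)
    {G : Type} [Group G] [Finite G]
    (H K : Subgroup G) [hH : H.Normal] [hK : K.Normal] (hcf : IsChiefFactor H K)
    (hnot : ¬ 𝔉.InSect H K)
    (R : Subgroup G) (hR : 𝔉.IsRadical R) :
    R ≤ sectionCentralizer H K ∧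
    H.map (QuotientGroup.mk' K) ⊓ R.map (QuotientGroup.mk' K) = ⊥ ∧
    H.map (QuotientGroup.mk' K) ⊔ R.map (QuotientGroup.mk' K)
      = (H ⊔ R).map (QuotientGroup.mk' K) ∧
    ∀ x ∈ H.map (QuotientGroup.mk' K), ∀ y ∈ R.map (QuotientGroup.mk' K),
      Commute x y := by
  have : R.Normal := hR.1
  have hmeet : H ⊓ (K ⊔ R) = K := h𝔉.inf_sup_eq_of_not_inSect hcf hnot hR.2.1
  have hcent : R ≤ sectionCentralizer H K := by
    rw [le_sectionCentralizer_iff, ← hmeet]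
    exact le_inf (commutator_le_right R H) ((commutator_le_left R H).trans le_sup_right)
  exact ⟨hcent, map_mk_inf_map_mk_eq_bot hcf.1.le hmeet, (Subgroup.map_sup _ _ _).symm,
    fun _ hx _ hy => commute_of_mem_map_mk_of_le_sectionCentralizer hcent hx hy⟩
end

section
/- Let 𝔉 be a Baer-local formation defined by a Baer function f such that f(J) is a Fitting formation for every simple group J, and assume 𝔉 itself is a Fitting formation. Let H/K be a chief factor of a finite group G with f(H/K) ≠ ∅. Then G_𝔉 ≤ C_{G,f}(H/K). -/
open scoped commutatorElement

open Subgroup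

section Helpers

/-- trivial iso between subsingleton groups -/
def mulEquivOfSubsingleton (X Y : Type*) [Group X] [Group Y] [Subsingleton X] [Subsingleton Y] :
    X ≃* Y where
  toFun _ := 1
  invFun _ := 1
  left_inv _ := Subsingleton.elim _ _
  right_inv _ := Subsingleton.elim _ _
  map_mul' _ _ := (one_mul (1 : Y)).symm

def piReindex {α β : Type*} (e : α ≃ β) (J : Type*) [Mul J] : (α → J) ≃* (β → J) where
  toFun f := f ∘ e.symm
  invFun f := f ∘ e
  left_inv f := by ext a; simp
  right_inv f := by ext b; simp
  map_mul' f g := rfl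

def piUncurry (a b : ℕ) (J : Type*) [Mul J] : (Fin a → Fin b → J) ≃* (Fin a × Fin b → J) where
  toFun f p := f p.1 p.2
  invFun f i j := f (i, j)
  left_inv f := rfl
  right_inv f := rfl
  map_mul' f g := rfl

/-- compose power isomorphisms -/
def powPow {X Y J : Type*} [Group X] [Group Y] [Group J] (a b : ℕ)
    (e1 : X ≃* (Fin a → Y)) (e2 : Y ≃* (Fin b → J)) : X ≃* (Fin (a * b) → J) :=
  e1.trans <| (MulEquiv.piCongrRight fun _ => e2).trans <|
    (piUncurry a b J).trans (piReindex finProdFinEquiv J)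

lemma sup_equiv_prod {W : Type*} [Group W] {D E : Subgroup W}
    (hcomm : ∀ d ∈ D, ∀ e ∈ E, Commute d e)
    (hdisj : D ⊓ E = ⊥) : Nonempty (↥(D ⊔ E) ≃* ↥D × ↥E) := by
  have hc : ∀ (d : ↥D) (e : ↥E), Commute (D.subtype d) (E.subtype e) :=
    fun d e => hcomm d d.2 e e.2
  set φ : ↥D × ↥E →* W := MonoidHom.noncommCoprod D.subtype E.subtype hc with hφ
  have happ : ∀ p : ↥D × ↥E, φ p = (p.1 : W) * (p.2 : W) := fun p => rfl
  have hinj : Function.Injective φ := by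
    intro p q h
    rw [happ, happ] at h
    have h2 : (q.1 : W)⁻¹ * p.1 = q.2 * (p.2 : W)⁻¹ := by
      have h' : (q.1 : W)⁻¹ * ((p.1 : W) * p.2) * (p.2 : W)⁻¹
          = (q.1 : W)⁻¹ * ((q.1 : W) * q.2) * (p.2 : W)⁻¹ := by rw [h]
      simpa [mul_assoc] using h'
    have hmD : (q.1 : W)⁻¹ * p.1 ∈ D := mul_mem (inv_mem q.1.2) p.1.2
    have hmE : (q.1 : W)⁻¹ * p.1 ∈ E := h2 ▸ mul_mem q.2.2 (inv_mem p.2.2)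
    have : (q.1 : W)⁻¹ * (p.1 : W) ∈ D ⊓ E := ⟨hmD, hmE⟩
    rw [hdisj, Subgroup.mem_bot] at this
    have e1 : (q.1 : W) = p.1 := inv_mul_eq_one.mp this
    have h3 : (q.2 : W) * (p.2 : W)⁻¹ = 1 := by rw [← h2, this]
    have e2 : (q.2 : W) = p.2 := mul_inv_eq_one.mp h3
    exact Prod.ext (Subtype.ext e1.symm) (Subtype.ext e2.symm)
  have hrange : φ.range = D ⊔ E := by
    apply le_antisymm
    · rintro x ⟨p, rfl⟩
      rw [happ]
      exact mul_mem (le_sup_left (α := Subgroup W) p.1.2) (le_sup_right (α := Subgroup W) p.2.2)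
    · rw [sup_le_iff]
      constructor
      · intro d hd; exact ⟨(⟨d, hd⟩, 1), by simp [happ]⟩
      · intro e he; exact ⟨(1, ⟨e, he⟩), by simp [happ]⟩
  exact ⟨((MonoidHom.ofInjective hinj).trans (MulEquiv.subgroupCongr hrange)).symm⟩

lemma map_equiv_quotient {G G' : Type*} [Group G] [Group G'] (φ : G →* G') (R : Subgroup G)
    (hn : ((φ.ker).subgroupOf R).Normal) :
    Nonempty (↥(R.map φ) ≃* (↥R ⧸ (φ.ker).subgroupOf R)) := by
  have hmem : ∀ x : ↥R, φ.domRestrict R x ∈ R.map φ := fun x => ⟨x, x.2, rfl⟩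
  set ψ : ↥R →* ↥(R.map φ) := (φ.domRestrict R).codRestrict (R.map φ) hmem with hψ
  have hsurj : Function.Surjective ψ := by
    rintro ⟨y, x, hx, rfl⟩
    exact ⟨⟨x, hx⟩, rfl⟩
  have hker : ψ.ker = (φ.ker).subgroupOf R := by
    ext x
    simp [hψ, MonoidHom.mem_ker, Subgroup.mem_subgroupOf, Subtype.ext_iff,
      MonoidHom.restrict_apply]
  have e := QuotientGroup.quotientKerEquivOfSurjective ψ hsurj
  exact ⟨e.symm.trans (QuotientGroup.quotientMulEquivOfEq hker)⟩

end Helpers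
open Subgroup

section MinNormal

variable {W : Type*} [Group W]

/-- conjugate of a subgroup -/
def cj (g : W) (T : Subgroup W) : Subgroup W := T.map (MulAut.conj g).toMonoidHom

lemma mem_cj {g x : W} {T : Subgroup W} : x ∈ cj g T ↔ g⁻¹ * x * g ∈ T := by
  constructor
  · rintro ⟨t, ht, rfl⟩
    simpa [MulAut.conj, mul_assoc] using ht
  · intro h
    exact ⟨g⁻¹ * x * g, h, by simp [MulAut.conj, mul_assoc]⟩

lemma cj_mem {g t : W} {T : Subgroup W} (ht : t ∈ T) : g * t * g⁻¹ ∈ cj g T :=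
  mem_cj.mpr (by simpa [mul_assoc] using ht)

lemma cj_cj_inv (g : W) (U : Subgroup W) : cj g (cj g⁻¹ U) = U := by
  ext x
  rw [mem_cj, mem_cj]
  simp [mul_assoc]

lemma cj_one (T : Subgroup W) : cj 1 T = T := by
  ext x; rw [mem_cj]; simp

lemma cj_ne_bot {g : W} {T : Subgroup W} (h : T ≠ ⊥) : cj g T ≠ ⊥ := by
  intro hbot
  apply h
  rw [eq_bot_iff]
  intro t ht
  have : g * t * g⁻¹ ∈ cj g T := cj_mem ht
  rw [hbot, Subgroup.mem_bot] at this
  have : t = 1 := by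
    have := congrArg (fun z => g⁻¹ * z * g) this
    simpa [mul_assoc] using this
  simpa [this] using Subgroup.one_mem _

/-- `S` is a minimal subgroup among the nontrivial subgroups normalized by `P`,
and is itself contained in `P`. -/
def MinNormalIn (P S : Subgroup W) : Prop :=
  S ≠ ⊥ ∧ S ≤ P ∧ (∀ g ∈ P, ∀ s ∈ S, g * s * g⁻¹ ∈ S) ∧
  ∀ T : Subgroup W, T ≠ ⊥ → T ≤ S → (∀ g ∈ P, ∀ t ∈ T, g * t * g⁻¹ ∈ T) → T = S

lemma exists_minNormalIn [Finite W] (P : Subgroup W) :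
    ∀ (X : Subgroup W), X ≠ ⊥ → X ≤ P → (∀ g ∈ P, ∀ s ∈ X, g * s * g⁻¹ ∈ X) →
    ∃ S : Subgroup W, S ≤ X ∧ MinNormalIn P S := by
  have : ∀ (n : ℕ) (X : Subgroup W), Nat.card X ≤ n → X ≠ ⊥ → X ≤ P →
      (∀ g ∈ P, ∀ s ∈ X, g * s * g⁻¹ ∈ X) → ∃ S : Subgroup W, S ≤ X ∧ MinNormalIn P S := by
    intro n
    induction n with
    | zero => intro X hcard; intro h; exact absurd (Nat.le_zero.mp hcard) (Nat.card_pos).ne'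
    | succ n ih =>
      intro X hcard hne hle hconj
      by_cases hmin : ∀ T : Subgroup W, T ≠ ⊥ → T ≤ X →
          (∀ g ∈ P, ∀ t ∈ T, g * t * g⁻¹ ∈ T) → T = X
      · exact ⟨X, le_rfl, hne, hle, hconj, hmin⟩
      · push_neg at hmin
        obtain ⟨T, hT1, hT2, hT3, hT4⟩ := hmin
        have hTlt : Nat.card T < Nat.card X := by
          rcases lt_or_ge (Nat.card T) (Nat.card X) with h | h
          · exact h
          · exact absurd (Subgroup.eq_of_le_of_card_ge hT2 h) hT4
        obtain ⟨S, hS1, hS2⟩ := ih T (by omega) hT1 (hT2.trans hle) hT3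
        exact ⟨S, hS1.trans hT2, hS2⟩
  intro X
  exact this (Nat.card X) X le_rfl

lemma cj_minNormalIn {P T : Subgroup W} {g : W} (hT : MinNormalIn P T)
    (hg1 : ∀ p ∈ P, g * p * g⁻¹ ∈ P) (hg2 : ∀ p ∈ P, g⁻¹ * p * g ∈ P) :
    MinNormalIn P (cj g T) := by
  obtain ⟨hne, hle, hconj, hmin⟩ := hT
  refine ⟨cj_ne_bot hne, ?_, ?_, ?_⟩
  · rintro x ⟨t, ht, rfl⟩
    simpa [MulAut.conj, mul_assoc] using hg1 t (hle ht)
  · rintro q hq x hx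
    rw [mem_cj] at hx ⊢
    have h1 : g⁻¹ * q * g ∈ P := hg2 q hq
    have := hconj _ h1 _ hx
    have e : (g⁻¹ * q * g) * (g⁻¹ * x * g) * (g⁻¹ * q * g)⁻¹ = g⁻¹ * (q * x * q⁻¹) * g := by
      group
    rwa [e] at this
  · intro U hU1 hU2 hU3
    have kle : cj g⁻¹ U ≤ T := by
      intro y hy
      rw [mem_cj, inv_inv] at hy
      have h' := hU2 hy
      rw [mem_cj] at h'
      have e : g⁻¹ * (g * y * g⁻¹) * g = y := by group
      rwa [e] at h'
    have kne : cj g⁻¹ U ≠ ⊥ := cj_ne_bot hU1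
    have kconj : ∀ p ∈ P, ∀ t ∈ cj g⁻¹ U, p * t * p⁻¹ ∈ cj g⁻¹ U := by
      intro p hp t ht
      rw [mem_cj, inv_inv] at ht ⊢
      have h1 : g * p * g⁻¹ ∈ P := hg1 p hp
      have h2 := hU3 _ h1 _ ht
      have e : (g * p * g⁻¹) * (g * t * g⁻¹) * (g * p * g⁻¹)⁻¹ = g * (p * t * p⁻¹) * g⁻¹ := by
        group
      rwa [e] at h2
    have hEq := hmin _ kne kle kconj
    rw [← hEq]
    exact (cj_cj_inv g U).symm

end MinNormal

section Greedy

def piFinSnoc (n : ℕ) (J : Type*) [Mul J] : ((Fin n → J) × J) ≃* (Fin (n + 1) → J) where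
  toFun p := Fin.snoc p.1 p.2
  invFun f := (Fin.init f, f (Fin.last n))
  left_inv p := by simp
  right_inv f := by simp [Fin.snoc_init_self]
  map_mul' p q := by
    ext i
    refine Fin.lastCases ?_ ?_ i <;> simp

variable {W : Type*} [Group W]

lemma greedy [Finite W] (M P A T : Subgroup W)
    (hMA : MinNormalIn M A)
    (hP : ∀ g ∈ M, ∀ p ∈ P, g * p * g⁻¹ ∈ P)
    (hAP : A ≤ P)
    (hT : MinNormalIn P T) (hTA : T ≤ A) :
    ∃ (m : ℕ) (c : Fin (m + 1) → W), (∀ i, c i ∈ M) ∧ (⨆ i, cj (c i) T) = A ∧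
      Nonempty (↥A ≃* (Fin (m + 1) → ↥T)) := by
  have hconjA : ∀ g ∈ M, ∀ a ∈ A, g * a * g⁻¹ ∈ A := hMA.2.2.1
  have cjT_le_A : ∀ g ∈ M, cj g T ≤ A := by
    rintro g hg x ⟨t, ht, rfl⟩
    simpa [MulAut.conj, mul_assoc] using hconjA g hg t (hTA ht)
  have cjT_min : ∀ g ∈ M, MinNormalIn P (cj g T) := by
    intro g hg
    refine cj_minNormalIn hT (fun p hp => hP g hg p hp) (fun p hp => ?_)
    have := hP g⁻¹ (inv_mem hg) p hp
    simpa using this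
  have cjT_le_P : ∀ g ∈ M, cj g T ≤ P := fun g hg => (cjT_min g hg).2.1
  -- conjugation-closure of sups
  have sup_closed : ∀ {m : ℕ} (c : Fin (m + 1) → W), (∀ i, c i ∈ M) →
      ∀ p ∈ P, ∀ d ∈ (⨆ i, cj (c i) T), p * d * p⁻¹ ∈ (⨆ i, cj (c i) T) := by
    intro m c hc p hp d hd
    have hle : (⨆ i, cj (c i) T) ≤ (⨆ i, cj (c i) T).comap (MulAut.conj p).toMonoidHom := by
      refine iSup_le fun i => ?_
      intro x hx
      rw [Subgroup.mem_comap]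
      have h1 : p * x * p⁻¹ ∈ cj (c i) T := (cjT_min (c i) (hc i)).2.2.1 p hp x hx
      have h2 : p * x * p⁻¹ ∈ (⨆ i, cj (c i) T) := le_iSup (fun i => cj (c i) T) i h1
      simpa [MulAut.conj] using h2
    have := hle hd
    rw [Subgroup.mem_comap] at this
    simpa [MulAut.conj] using this
  have aux : ∀ k : ℕ, ∀ (m : ℕ) (c : Fin (m + 1) → W), (∀ i, c i ∈ M) →
      Nonempty (↥(⨆ i, cj (c i) T) ≃* (Fin (m + 1) → ↥T)) →
      Nat.card A ≤ k + Nat.card ↥(⨆ i, cj (c i) T) →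
      ∃ (m : ℕ) (c : Fin (m + 1) → W), (∀ i, c i ∈ M) ∧ (⨆ i, cj (c i) T) = A ∧
        Nonempty (↥A ≃* (Fin (m + 1) → ↥T)) := by
    intro k
    induction k with
    | zero =>
      intro m c hc hiso hcard
      have hDle : (⨆ i, cj (c i) T) ≤ A := iSup_le fun i => cjT_le_A _ (hc i)
      have hDA : (⨆ i, cj (c i) T) = A :=
        Subgroup.eq_of_le_of_card_ge hDle (by simpa using hcard)
      exact ⟨m, c, hc, hDA, by rw [← hDA]; exact hiso⟩
    | succ k ih =>
      intro m c hc hiso hcard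
      set D := ⨆ i, cj (c i) T with hD
      have hDle : D ≤ A := iSup_le fun i => cjT_le_A _ (hc i)
      by_cases hDA : D = A
      · exact ⟨m, c, hc, hDA, by rw [← hDA]; exact hiso⟩
      -- find a conjugate not inside D
      have hw : ∃ w ∈ M, ¬ cj w T ≤ D := by
        by_contra hall
        push_neg at hall
        set Dm := ⨆ w : ↥M, cj (w : W) T with hDm
        have hTDm : T ≤ Dm := by
          have h1 : cj ((1 : ↥M) : W) T ≤ Dm := le_iSup (fun w : ↥M => cj (w : W) T) 1
          rwa [OneMemClass.coe_one, cj_one] at h1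
        have h1 : Dm ≠ ⊥ := fun h => hT.1 (eq_bot_iff.mpr (h ▸ hTDm))
        have h2 : Dm ≤ A := iSup_le fun w => cjT_le_A _ w.2
        have h3 : ∀ g ∈ M, ∀ s ∈ Dm, g * s * g⁻¹ ∈ Dm := by
          intro g hg s hs
          have hle : Dm ≤ Dm.comap (MulAut.conj g).toMonoidHom := by
            refine iSup_le fun w => ?_
            rintro x ⟨t, ht, rfl⟩
            rw [Subgroup.mem_comap]
            have hmem : g * ((w : W) * t * (w : W)⁻¹) * g⁻¹ ∈ cj (g * w) T := by
              have := cj_mem (g := g * (w : W)) ht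
              rwa [show g * (w : W) * t * (g * (w : W))⁻¹
                = g * ((w : W) * t * (w : W)⁻¹) * g⁻¹ by group] at this
            have hle2 : cj (g * (w : W)) T ≤ Dm :=
              le_iSup (fun w : ↥M => cj (w : W) T) ⟨g * w, mul_mem hg w.2⟩
            simpa [MulAut.conj, mul_assoc] using hle2 hmem
          have := hle hs
          rw [Subgroup.mem_comap] at this
          simpa [MulAut.conj] using this
        have h4 : Dm = A := hMA.2.2.2 Dm h1 h2 h3
        have h5 : Dm ≤ D := iSup_le fun w => hall (w : W) w.2
        exact hDA (le_antisymm hDle (h4 ▸ h5))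
      obtain ⟨w, hwM, hwnle⟩ := hw
      set E := cj w T with hE
      have hEmin : MinNormalIn P E := cjT_min w hwM
      have hDclosed : ∀ p ∈ P, ∀ d ∈ D, p * d * p⁻¹ ∈ D := sup_closed c hc
      have hED : E ⊓ D = ⊥ := by
        by_contra hne
        have hconj : ∀ g ∈ P, ∀ t ∈ E ⊓ D, g * t * g⁻¹ ∈ E ⊓ D := by
          intro g hg t ht
          exact ⟨hEmin.2.2.1 g hg t ht.1, hDclosed g hg t ht.2⟩
        have := hEmin.2.2.2 (E ⊓ D) hne inf_le_left hconj
        exact hwnle (inf_eq_left.mp this)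
      have hcomm : ∀ d ∈ D, ∀ e ∈ E, Commute d e := by
        intro d hd e he
        have hdP : d ∈ P := hAP (hDle hd)
        have heP : e ∈ P := hEmin.2.1 he
        have h1 : d * e * d⁻¹ * e⁻¹ ∈ E := mul_mem (hEmin.2.2.1 d hdP e he) (inv_mem he)
        have h2 : d * e * d⁻¹ * e⁻¹ ∈ D := by
          have := hDclosed e heP d⁻¹ (inv_mem hd)
          have h3 : d * (e * d⁻¹ * e⁻¹) ∈ D := mul_mem hd this
          rwa [show d * (e * d⁻¹ * e⁻¹) = d * e * d⁻¹ * e⁻¹ by group] at h3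
        have : d * e * d⁻¹ * e⁻¹ ∈ E ⊓ D := ⟨h1, h2⟩
        rw [hED, Subgroup.mem_bot] at this
        have hc1 : ⁅d, e⁆ = (1 : W) := by rw [commutatorElement_def]; exact this
        exact commutatorElement_eq_one_iff_commute.mp hc1
      have hdisj : D ⊓ E = ⊥ := by rw [inf_comm]; exact hED
      obtain ⟨eDE⟩ := sup_equiv_prod hcomm hdisj
      obtain ⟨eiso⟩ := hiso
      have eTE : ↥T ≃* ↥E := MulEquiv.subgroupMap (MulAut.conj w) T
      set c' : Fin (m + 2) → W := Fin.snoc c w with hc'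
      have hc'M : ∀ i, c' i ∈ M := by
        intro i
        refine Fin.lastCases ?_ ?_ i
        · simp [hc', Fin.snoc_last]; exact hwM
        · intro j; simp [hc', Fin.snoc_castSucc]; exact hc j
      have hsup' : (⨆ i, cj (c' i) T) = D ⊔ E := by
        apply le_antisymm
        · refine iSup_le fun i => ?_
          refine Fin.lastCases ?_ ?_ i
          · rw [show c' (Fin.last (m + 1)) = w by simp [hc', Fin.snoc_last]]
            exact le_sup_right
          · intro j
            rw [show c' j.castSucc = c j by simp [hc', Fin.snoc_castSucc]]
            exact le_trans (le_iSup (fun i => cj (c i) T) j) le_sup_left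
        · refine sup_le ?_ ?_
          · refine iSup_le fun j => ?_
            have := le_iSup (fun i => cj (c' i) T) j.castSucc
            rwa [show c' j.castSucc = c j by simp [hc', Fin.snoc_castSucc]] at this
          · have := le_iSup (fun i => cj (c' i) T) (Fin.last (m + 1))
            rwa [show c' (Fin.last (m + 1)) = w by simp [hc', Fin.snoc_last]] at this
      have hiso' : Nonempty (↥(⨆ i, cj (c' i) T) ≃* (Fin (m + 2) → ↥T)) := by
        refine ⟨((MulEquiv.subgroupCongr hsup').trans eDE).trans ?_⟩
        exact (MulEquiv.prodCongr eiso eTE.symm).trans (piFinSnoc (m + 1) ↥T)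
      have hlt : Nat.card ↥D < Nat.card ↥(D ⊔ E) := by
        refine lt_of_le_of_ne (Subgroup.card_le_of_le le_sup_left) fun h => ?_
        have := Subgroup.eq_of_le_of_card_ge (le_sup_left : D ≤ D ⊔ E) (le_of_eq h.symm)
        exact hwnle (this ▸ (le_sup_right : E ≤ D ⊔ E))
      refine ih (m + 1) c' hc'M hiso' ?_
      rw [hsup']
      omega
  -- initial data
  have h0 : (⨆ _i : Fin 1, cj ((fun _ => (1 : W)) _i) T) = T := by
    simp [cj_one]
  refine aux (Nat.card A) 0 (fun _ => 1) (fun _ => one_mem M) ?_ ?_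
  · exact ⟨(MulEquiv.subgroupCongr h0).trans (MulEquiv.piUnique (fun _ : Fin 1 => ↥T)).symm⟩
  · exact Nat.le_add_right _ _

end Greedy

section Structure

theorem minNormal_structure :
    ∀ (n : ℕ) (W : Type) [Group W] [Finite W] (M S : Subgroup W),
      Nat.card ↥S ≤ n → MinNormalIn M S →
      ∃ (J : Type) (_ : Group J) (_ : Finite J), IsSimpleGroup J ∧
        ∃ m : ℕ, 0 < m ∧ Nonempty (↥S ≃* (Fin m → J)) := by
  intro n
  induction n with
  | zero =>
    intro W _ _ M S hcard hS
    exact absurd (Nat.le_zero.mp hcard) Nat.card_pos.ne'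
  | succ n ih =>
    intro W _ _ M S hcard hS
    by_cases hsimp : ∀ T : Subgroup W, T ≠ ⊥ → T ≤ S →
        (∀ g ∈ S, ∀ t ∈ T, g * t * g⁻¹ ∈ T) → T = S
    · -- S is itself simple
      haveI hnt : Nontrivial ↥S := (Subgroup.nontrivial_iff_ne_bot S).mpr hS.1
      haveI hsimple : IsSimpleGroup ↥S := by
        constructor
        intro X hX
        set X' := X.map S.subtype with hX'
        have hconj : ∀ g ∈ S, ∀ t ∈ X', g * t * g⁻¹ ∈ X' := by
          rintro g hg t ⟨y, hy, rfl⟩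
          exact ⟨(⟨g, hg⟩ : ↥S) * y * (⟨g, hg⟩ : ↥S)⁻¹, hX.conj_mem y hy ⟨g, hg⟩, rfl⟩
        by_cases hb : X' = ⊥
        · left
          have := (Subgroup.map_eq_bot_iff X).mp hb
          rw [Subgroup.ker_subtype, le_bot_iff] at this
          exact this
        · right
          have hXS : X' = S := hsimp X' hb (Subgroup.map_subtype_le X) hconj
          rw [eq_top_iff]
          intro y _
          have : (y : W) ∈ X' := by rw [hXS]; exact y.2
          obtain ⟨z, hz, hzy⟩ := this
          rwa [show z = y from Subtype.ext hzy] at hz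
      exact ⟨↥S, inferInstance, inferInstance, hsimple, 1, one_pos,
        ⟨(MulEquiv.piUnique (fun _ : Fin 1 => ↥S)).symm⟩⟩
    · push_neg at hsimp
      obtain ⟨T, hT1, hT2, hT3, hT4⟩ := hsimp
      obtain ⟨T', hT'le, hT'min⟩ := exists_minNormalIn S T hT1 hT2 hT3
      have hlt : Nat.card ↥T' < Nat.card ↥S := by
        have h1 : Nat.card ↥T' ≤ Nat.card ↥T := Subgroup.card_le_of_le hT'le
        have h2 : Nat.card ↥T < Nat.card ↥S := by
          rcases lt_or_ge (Nat.card ↥T) (Nat.card ↥S) with h | h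
          · exact h
          · exact absurd (Subgroup.eq_of_le_of_card_ge hT2 h) hT4
        omega
      obtain ⟨J, iJ, fJ, hJsimple, k, hk, ⟨eT'⟩⟩ := ih W S T' (by omega) hT'min
      have hP : ∀ g ∈ M, ∀ p ∈ S, g * p * g⁻¹ ∈ S := hS.2.2.1
      obtain ⟨m, c, hcM, hsup, ⟨eS⟩⟩ := greedy M S S T' hS hP le_rfl hT'min (hT'le.trans hT2)
      exact ⟨J, iJ, fJ, hJsimple, (m + 1) * k, by positivity, ⟨powPow (m + 1) k eS eT'⟩⟩

end Structure

section FormationUtils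

lemma formation_trivial {𝔽 : GroupClass} (hform : IsFormation 𝔽) (hne : 𝔽.IsNonempty)
    (X : Type) [Group X] [Subsingleton X] : 𝔽.In X := by
  obtain ⟨X₀, i₀, hfin, hX₀⟩ := hne
  letI := i₀; letI := hfin
  have h1 : 𝔽.In (X₀ ⧸ (⊤ : Subgroup X₀)) := hform.2.1 X₀ ⊤ hX₀
  haveI : Subsingleton (X₀ ⧸ (⊤ : Subgroup X₀)) := QuotientGroup.subsingleton_quotient_top
  exact hform.1 _ _ ⟨mulEquivOfSubsingleton _ _⟩ h1

lemma formation_quot_le {𝔽 : GroupClass} (hform : IsFormation 𝔽) {X : Type} [Group X] [Finite X]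
    (D E : Subgroup X) (hD : D.Normal) (hE : E.Normal) (hDE : D ≤ E)
    (h : 𝔽.In (X ⧸ D)) : 𝔽.In (X ⧸ E) := by
  haveI := hD; haveI := hE
  haveI : (E.map (QuotientGroup.mk' D)).Normal := hE.map _ (QuotientGroup.mk'_surjective D)
  have h1 : 𝔽.In ((X ⧸ D) ⧸ E.map (QuotientGroup.mk' D)) := hform.2.1 _ _ h
  exact hform.1 _ _ ⟨QuotientGroup.quotientQuotientEquivQuotient D E hDE⟩ h1

lemma normal_inf {X : Type} [Group X] {C D : Subgroup X} (hC : C.Normal) (hD : D.Normal) :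
    (C ⊓ D).Normal :=
  ⟨fun x hx g => ⟨hC.conj_mem x hx.1 g, hD.conj_mem x hx.2 g⟩⟩

lemma foldr_inf_le {X : Type} [Group X] :
    ∀ (l : List (Subgroup X)) (C : Subgroup X), C ∈ l → l.foldr (· ⊓ ·) ⊤ ≤ C
  | C' :: l, C, h => by
    rcases List.mem_cons.mp h with h | h
    · subst h; exact inf_le_left
    · exact le_trans inf_le_right (foldr_inf_le l C h)

lemma formation_inf_list {𝔽 : GroupClass} (hform : IsFormation 𝔽) (hne : 𝔽.IsNonempty)
    {X : Type} [Group X] [Finite X] :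
    ∀ l : List (Subgroup X), (∀ C ∈ l, ∃ _ : C.Normal, 𝔽.In (X ⧸ C)) →
      ∃ _ : (l.foldr (· ⊓ ·) ⊤).Normal, 𝔽.In (X ⧸ l.foldr (· ⊓ ·) ⊤)
  | [], _ => by
    simp only [List.foldr_nil]
    refine ⟨inferInstance, ?_⟩
    haveI : Subsingleton (X ⧸ (⊤ : Subgroup X)) := QuotientGroup.subsingleton_quotient_top
    exact formation_trivial hform hne _
  | C :: l, hm => by
    obtain ⟨hn1, hm1⟩ := formation_inf_list hform hne l
      (fun C hC => hm C (List.mem_cons_of_mem _ hC))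
    obtain ⟨hnC, hmC⟩ := hm C List.mem_cons_self
    haveI := hn1; haveI := hnC
    simp only [List.foldr_cons]
    exact ⟨normal_inf hnC hn1, hform.2.2 X C _ hmC hm1⟩

end FormationUtils


section MainKey

lemma coe_commutator {W : Type} [Group W] {N : Subgroup W} (x h : ↥N) :
    ((⁅x, h⁆ : ↥N) : W) = ⁅(x : W), (h : W)⁆ := by
  simp [commutatorElement_def]

lemma main_key (f : BaerFunction) (hf : IsBaerFunction f)
    (𝔉 : GroupClass) (h𝔉f : DefinedByBaerFunction 𝔉 f)
    (W : Type) [Group W] [Finite W]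
    (A : Subgroup W) (hA : MinNormalIn ⊤ A)
    (N : Subgroup W) (hN : N.Normal) (hNF : 𝔉.In ↥N)
    (hneA : (f.app ↥A).IsNonempty) :
    ∃ _ : ((sectionCentralizer A (⊥ : Subgroup W)).subgroupOf N).Normal,
      (f.app ↥A).In (↥N ⧸ (sectionCentralizer A (⊥ : Subgroup W)).subgroupOf N) := by
  haveI hAn : A.Normal := ⟨fun a ha g => hA.2.2.1 g trivial a ha⟩
  haveI hCWn : (sectionCentralizer A (⊥ : Subgroup W)).Normal := sectionCentralizer_normal A ⊥
  set CW := sectionCentralizer A (⊥ : Subgroup W) with hCW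
  haveI hEn : (CW.subgroupOf N).Normal := hCWn.subgroupOf N
  refine ⟨hEn, ?_⟩
  -- the type of A
  obtain ⟨J₀, iJ₀, fJ₀, hJ₀, n₀, hn₀, ⟨eA₀⟩⟩ :=
    minNormal_structure (Nat.card ↥A) W ⊤ A le_rfl hA
  have hFA₀ : f.app ↥A = f.app J₀ := hf.respects_type ↥A J₀ hJ₀ ⟨n₀, hn₀, ⟨eA₀⟩⟩
  by_cases hcase : A ⊓ N = ⊥
  · -- N centralizes A
    have hNC : N ≤ CW := by
      intro x hx
      rw [hCW, mem_sectionCentralizer_iff]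
      intro a ha
      have h1 : ⁅x, a⁆ ∈ A := by
        rw [commutatorElement_def]
        exact mul_mem (by simpa [mul_assoc] using hAn.conj_mem a ha x) (inv_mem ha)
      have h2 : ⁅x, a⁆ ∈ N := by
        rw [commutatorElement_def]
        have h3 : a * x⁻¹ * a⁻¹ ∈ N := hN.conj_mem x⁻¹ (inv_mem hx) a
        have := mul_mem hx h3
        rwa [show x * (a * x⁻¹ * a⁻¹) = x * a * x⁻¹ * a⁻¹ by group] at this
      have : ⁅x, a⁆ ∈ A ⊓ N := ⟨h1, h2⟩
      rw [hcase] at this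
      exact this
    have hEtop : CW.subgroupOf N = ⊤ := Subgroup.subgroupOf_eq_top.mpr hNC
    haveI : Subsingleton (↥N ⧸ CW.subgroupOf N) := by
      rw [hEtop]; exact QuotientGroup.subsingleton_quotient_top
    rw [hFA₀]
    letI := iJ₀; letI := fJ₀
    exact formation_trivial (hf.formation_valued J₀ hJ₀) (by rw [← hFA₀]; exact hneA) _
  · -- A ≤ N
    have hconjinf : ∀ g ∈ (⊤ : Subgroup W), ∀ s ∈ A ⊓ N, g * s * g⁻¹ ∈ A ⊓ N := by
      intro g _ s hs
      exact ⟨hA.2.2.1 g trivial s hs.1, hN.conj_mem s hs.2 g⟩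
    have hAN : A ≤ N := inf_eq_left.mp (hA.2.2.2 (A ⊓ N) hcase inf_le_left hconjinf)
    have hAclosedN : ∀ g ∈ N, ∀ s ∈ A, g * s * g⁻¹ ∈ A := fun g _ s hs => hA.2.2.1 g trivial s hs
    obtain ⟨S, hSA, hSmin⟩ := exists_minNormalIn N A hA.1 hAN hAclosedN
    obtain ⟨J, iJ, fJ, hJ, k, hk, ⟨eS⟩⟩ :=
      minNormal_structure (Nat.card ↥S) W N S le_rfl hSmin
    letI := iJ; letI := fJ
    obtain ⟨m, c, hcM, hsup, ⟨eA2⟩⟩ := greedy ⊤ N A S hA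
      (fun g _ p hp => hN.conj_mem p hp g) hAN hSmin hSA
    have hFA : f.app ↥A = f.app J :=
      hf.respects_type ↥A J hJ ⟨(m + 1) * k, by positivity, ⟨powPow (m + 1) k eA2 eS⟩⟩
    set B : Fin (m + 1) → Subgroup W := fun i => cj (c i) S with hB
    have hBmin : ∀ i, MinNormalIn N (B i) := by
      intro i
      refine cj_minNormalIn hSmin (fun p hp => hN.conj_mem p hp (c i)) (fun p hp => ?_)
      simpa using hN.conj_mem p hp (c i)⁻¹
    have eB : ∀ i, ↥S ≃* ↥(B i) := fun i => MulEquiv.subgroupMap (MulAut.conj (c i)) S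
    have hBN : ∀ i, B i ≤ N := fun i => (hBmin i).2.1
    -- each subgroupOf is normal in N
    have hB'n : ∀ i, ((B i).subgroupOf N).Normal := by
      intro i
      constructor
      intro x hx g
      rw [Subgroup.mem_subgroupOf] at hx ⊢
      have := (hBmin i).2.2.1 (g : W) g.2 (x : W) hx
      simpa using this
    -- membership of the quotients by the section centralizers
    have hmem : ∀ i,
        ∃ _ : ((B i).subgroupOf N).Normal,
        ∃ _ : (sectionCentralizer ((B i).subgroupOf N) (⊥ : Subgroup ↥N)).Normal,
          (f.app J).In (↥N ⧸ sectionCentralizer ((B i).subgroupOf N) (⊥ : Subgroup ↥N)) := by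
      intro i
      haveI hB'ni := hB'n i
      haveI hCn : (sectionCentralizer ((B i).subgroupOf N) (⊥ : Subgroup ↥N)).Normal :=
        sectionCentralizer_normal _ _
      refine ⟨hB'ni, hCn, ?_⟩
      have hchief : IsChiefFactor ((B i).subgroupOf N) (⊥ : Subgroup ↥N) := by
        constructor
        · rw [bot_lt_iff_ne_bot]
          intro hbot
          apply (hBmin i).1
          rw [eq_bot_iff]
          intro b hb
          have : (⟨b, hBN i hb⟩ : ↥N) ∈ (B i).subgroupOf N := Subgroup.mem_subgroupOf.mpr hb
          rw [hbot, Subgroup.mem_bot] at this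
          simpa using congrArg (Subgroup.subtype N) this
        · intro L hL _ hLB
          set L' := L.map N.subtype with hL'
          have hL'B : L' ≤ B i := by
            rintro x ⟨y, hy, rfl⟩
            exact Subgroup.mem_subgroupOf.mp (hLB hy)
          have hL'conj : ∀ g ∈ N, ∀ t ∈ L', g * t * g⁻¹ ∈ L' := by
            rintro g hg t ⟨y, hy, rfl⟩
            refine ⟨(⟨g, hg⟩ : ↥N) * y * (⟨g, hg⟩ : ↥N)⁻¹, hL.conj_mem y hy _, by simp⟩
          by_cases hb : L' = ⊥
          · left
            have := (Subgroup.map_eq_bot_iff L).mp hb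
            rw [Subgroup.ker_subtype, le_bot_iff] at this
            exact this
          · right
            have hLB' : L' = B i := (hBmin i).2.2.2 L' hb hL'B hL'conj
            apply Subgroup.map_injective (Subgroup.subtype_injective N)
            rw [← hL', hLB', Subgroup.subgroupOf_map_subtype, inf_eq_left.mpr (hBN i)]
      have hIn := (h𝔉f ↥N).mp hNF ((B i).subgroupOf N) ⊥ hchief
      -- identify the class
      have hpow : IsDirectPowerOf
          (↥((B i).subgroupOf N) ⧸ (⊥ : Subgroup ↥N).subgroupOf ((B i).subgroupOf N)) J := by
        refine ⟨k, hk, ⟨?_⟩⟩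
        refine (QuotientGroup.quotientMulEquivOfEq (Subgroup.bot_subgroupOf _)).trans <|
          (QuotientGroup.quotientBot).trans <|
          ((Subgroup.subgroupOfEquivOfLe (hBN i)).trans (((eB i).symm).trans eS))
      have heq : f.atSection ((B i).subgroupOf N) (⊥ : Subgroup ↥N) = f.app J :=
        hf.respects_type _ J hJ hpow
      rwa [heq] at hIn
    -- intersect over the list of centralizers
    set l : List (Subgroup ↥N) :=
      List.ofFn (fun i => sectionCentralizer ((B i).subgroupOf N) (⊥ : Subgroup ↥N)) with hl
    have hformJ := hf.formation_valued J hJ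
    have hneJ : (f.app J).IsNonempty := by rw [← hFA]; exact hneA
    obtain ⟨hnfold, hmfold⟩ := formation_inf_list hformJ hneJ l (by
      intro C hC
      rw [hl, List.mem_ofFn] at hC
      obtain ⟨i, rfl⟩ := hC
      obtain ⟨h1, h2, h3⟩ := hmem i
      exact ⟨h2, h3⟩)
    -- the intersection centralizes A
    have hfold_le : l.foldr (· ⊓ ·) ⊤ ≤ CW.subgroupOf N := by
      intro x hx
      rw [Subgroup.mem_subgroupOf, hCW, mem_sectionCentralizer_iff]
      have hAZ : A ≤ Subgroup.centralizer {(x : W)} := by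
        rw [← hsup]
        refine iSup_le fun i => ?_
        intro b hb
        have hxi : x ∈ sectionCentralizer ((B i).subgroupOf N) (⊥ : Subgroup ↥N) := by
          refine foldr_inf_le l _ ?_ hx
          rw [hl, List.mem_ofFn]
          exact ⟨i, rfl⟩
        rw [mem_sectionCentralizer_iff] at hxi
        have hbN : b ∈ N := hBN i hb
        have h1 := hxi ⟨b, hbN⟩ (Subgroup.mem_subgroupOf.mpr hb)
        rw [Subgroup.mem_bot] at h1
        have h2 : ⁅(x : W), b⁆ = 1 := by
          rw [← coe_commutator x (⟨b, hbN⟩ : ↥N), h1]; rfl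
        have h3 : Commute (x : W) b := commutatorElement_eq_one_iff_commute.mp h2
        rw [Subgroup.mem_centralizer_singleton_iff]
        exact h3.symm.eq
      intro h hh
      have := hAZ hh
      rw [Subgroup.mem_centralizer_singleton_iff] at this
      rw [Subgroup.mem_bot]
      exact commutatorElement_eq_one_iff_commute.mpr this.symm
    have hfinal : (f.app J).In (↥N ⧸ CW.subgroupOf N) :=
      formation_quot_le hformJ _ _ hnfold hEn hfold_le hmfold
    rwa [hFA]

end MainKey

/-- Let `𝔉` be a Baer-local formation defined by a Baer function `f` whose
value on every simple group is a Fitting formation, and assume `𝔉` is itself a Fitting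
formation.  If `H/K` is a chief factor of the finite group `G` with `f(H/K) ≠ ∅`, then
`G_𝔉 ≤ C_{G,f}(H/K)` (the preimage in `G` of the `f(H/K)`-radical of `G/C_G(H/K)`). -/
theorem statement_3 (f : BaerFunction) (hf : IsBaerFunction f)
    (hfit : ∀ (J : Type) [Group J] [Finite J], IsSimpleGroup J → IsFittingFormation (f.app J))
    (𝔉 : GroupClass) (h𝔉f : DefinedByBaerFunction 𝔉 f) (h𝔉 : IsFittingFormation 𝔉)
    {G : Type} [Group G] [Finite G]
    (H K : Subgroup G) [hH : H.Normal] [hK : K.Normal] (hcf : IsChiefFactor H K)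
    (hne : (f.atSection H K).IsNonempty)
    (R : Subgroup G) (hR : 𝔉.IsRadical R) :
    haveI hC : (sectionCentralizer H K).Normal := sectionCentralizer_normal H K
    ∀ Rf : Subgroup (G ⧸ sectionCentralizer H K),
      (f.atSection H K).IsRadical Rf →
      R ≤ Rf.comap (QuotientGroup.mk' (sectionCentralizer H K)) := by
  
  intro Rf hRf
  haveI hC : (sectionCentralizer H K).Normal := sectionCentralizer_normal H K
  set C := sectionCentralizer H K with hCdef
  set ρ := QuotientGroup.mk' K with hρdef
  have hkerρ : ρ.ker = K := QuotientGroup.ker_mk' K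
  have hρ1 : ∀ x : G, ρ x = 1 ↔ x ∈ K := by
    intro x; rw [← MonoidHom.mem_ker, hkerρ]
  have hρsurj : Function.Surjective ρ := QuotientGroup.mk'_surjective K
  set A := H.map ρ with hAdef
  set N := R.map ρ with hNdef
  haveI hAnorm : A.Normal := hH.map ρ hρsurj
  haveI hNnorm : N.Normal := hR.1.map ρ hρsurj
  have hKH : K ≤ H := hcf.1.le
  -- A is a minimal normal subgroup of G ⧸ K
  have hAmin : MinNormalIn (⊤ : Subgroup (G ⧸ K)) A := by
    refine ⟨?_, le_top, fun g _ s hs => hAnorm.conj_mem s hs g, ?_⟩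
    · obtain ⟨x, hxH, hxK⟩ := SetLike.exists_of_lt hcf.1
      intro hbot
      have : ρ x ∈ A := Subgroup.mem_map_of_mem ρ hxH
      rw [hbot, Subgroup.mem_bot, hρ1] at this
      exact hxK this
    · intro T hT1 hT2 hT3
      haveI hTnorm : T.Normal := ⟨fun t ht g => hT3 g trivial t ht⟩
      set L := T.comap ρ with hLdef
      have hLnorm : L.Normal := hTnorm.comap ρ
      have hKL : K ≤ L := by
        intro x hx
        have : ρ x = 1 := (hρ1 x).mpr hx
        show ρ x ∈ T
        rw [this]; exact one_mem T
      have hLH : L ≤ H := by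
        have h1 : L ≤ A.comap ρ := Subgroup.comap_mono hT2
        rwa [hAdef, Subgroup.comap_map_eq, hkerρ, sup_eq_left.mpr hKH] at h1
      have hmapL : L.map ρ = T := Subgroup.map_comap_eq_self_of_surjective hρsurj T
      rcases hcf.2 L hLnorm hKL hLH with h | h
      · exfalso
        apply hT1
        rw [← hmapL, h, eq_bot_iff]
        rintro x ⟨k, hk, rfl⟩
        rw [Subgroup.mem_bot]
        exact (hρ1 k).mpr hk
      · rw [← hmapL, h]
  -- N belongs to the class
  have hNin : 𝔉.In ↥N := by
    haveI hn1 : ((ρ.ker).subgroupOf R).Normal := by rw [hkerρ]; exact hK.subgroupOf R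
    obtain ⟨eN⟩ := map_equiv_quotient ρ R hn1
    have h1 : 𝔉.In (↥R ⧸ (ρ.ker).subgroupOf R) := h𝔉.1.2.1 ↥R _ hR.2.1
    exact h𝔉.1.1 _ _ ⟨eN.symm⟩ h1
  -- identify the section class with f.app ↥A
  have hclass : f.atSection H K = f.app ↥A := by
    haveI hn2 : ((ρ.ker).subgroupOf H).Normal := by rw [hkerρ]; exact hK.subgroupOf H
    obtain ⟨eH⟩ := map_equiv_quotient ρ H hn2
    have hsub : K.subgroupOf H = (ρ.ker).subgroupOf H := by rw [hkerρ]
    exact hf.iso_invariant _ _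
      ⟨(QuotientGroup.quotientMulEquivOfEq hsub).trans eH.symm⟩
  have hneA' : (f.app ↥A).IsNonempty := by rw [← hclass]; exact hne
  -- apply the main lemma
  obtain ⟨hEn, hIn⟩ := main_key f hf 𝔉 h𝔉f (G ⧸ K) A hAmin N hNnorm hNin hneA'
  haveI hCWn : (sectionCentralizer A (⊥ : Subgroup (G ⧸ K))).Normal :=
    sectionCentralizer_normal A ⊥
  set CW := sectionCentralizer A (⊥ : Subgroup (G ⧸ K)) with hCWdef
  set σ := (QuotientGroup.mk' CW).comp ρ with hσdef
  have hkerσ : σ.ker = C := by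
    ext g
    rw [MonoidHom.mem_ker]
    have hmem : σ g = 1 ↔ ρ g ∈ CW := by
      rw [hσdef, MonoidHom.comp_apply, ← MonoidHom.mem_ker, QuotientGroup.ker_mk']
    rw [hmem]
    constructor
    · intro hg
      rw [hCdef, mem_sectionCentralizer_iff]
      intro h hh
      have h1 : ⁅ρ g, ρ h⁆ ∈ (⊥ : Subgroup (G ⧸ K)) := hg (ρ h) (Subgroup.mem_map_of_mem ρ hh)
      rw [Subgroup.mem_bot, ← map_commutatorElement] at h1
      exact (hρ1 _).mp h1
    · intro hg
      rw [hCWdef, mem_sectionCentralizer_iff]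
      rintro a ⟨h, hh, rfl⟩
      rw [Subgroup.mem_bot, ← map_commutatorElement]
      exact (hρ1 _).mpr (mem_sectionCentralizer_iff.mp hg h hh)
  have hmapmap : N.map (QuotientGroup.mk' CW) = R.map σ := by
    rw [hNdef, Subgroup.map_map]
  -- the class is iso-closed
  obtain ⟨J₁, iJ₁, fJ₁, hJ₁, n₁, hn₁, ⟨eA₁⟩⟩ :=
    minNormal_structure (Nat.card ↥A) (G ⧸ K) ⊤ A le_rfl hAmin
  letI := iJ₁; letI := fJ₁
  have hFA₁ : f.app ↥A = f.app J₁ := hf.respects_type ↥A J₁ hJ₁ ⟨n₁, hn₁, ⟨eA₁⟩⟩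
  have hiso_closed : (f.app ↥A).IsoClosed := by
    rw [hFA₁]; exact (hf.formation_valued J₁ hJ₁).1
  -- transfer the membership to the image of R in G ⧸ C
  haveI hn3 : ((σ.ker).subgroupOf R).Normal := by rw [hkerσ]; exact hC.subgroupOf R
  obtain ⟨eσ⟩ := map_equiv_quotient σ R hn3
  haveI hn4 : (((QuotientGroup.mk' C).ker).subgroupOf R).Normal := by
    rw [QuotientGroup.ker_mk']; exact hC.subgroupOf R
  obtain ⟨eμ⟩ := map_equiv_quotient (QuotientGroup.mk' C) R hn4
  haveI hn5 : (((QuotientGroup.mk' CW).ker).subgroupOf N).Normal := by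
    rw [QuotientGroup.ker_mk']; exact hCWn.subgroupOf N
  obtain ⟨eν⟩ := map_equiv_quotient (QuotientGroup.mk' CW) N hn5
  have hsub2 : ((QuotientGroup.mk' CW).ker).subgroupOf N = CW.subgroupOf N := by
    rw [QuotientGroup.ker_mk']
  have hsub3 : (σ.ker).subgroupOf R = ((QuotientGroup.mk' C).ker).subgroupOf R := by
    rw [hkerσ, QuotientGroup.ker_mk']
  -- big iso : ↥N ⧸ CW.subgroupOf N ≃* ↥(R.map (mk' C))
  have bigiso : (↥N ⧸ CW.subgroupOf N) ≃* ↥(R.map (QuotientGroup.mk' C)) :=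
    ((QuotientGroup.quotientMulEquivOfEq hsub2.symm).trans eν.symm).trans <|
      ((MulEquiv.subgroupCongr hmapmap).trans eσ).trans <|
        ((QuotientGroup.quotientMulEquivOfEq hsub3).trans eμ.symm)
  have hRmapIn : (f.atSection H K).In ↥(R.map (QuotientGroup.mk' C)) := by
    rw [hclass]
    exact hiso_closed _ _ ⟨bigiso⟩ hIn
  have hRmapNormal : (R.map (QuotientGroup.mk' C)).Normal := hR.1.map _ (QuotientGroup.mk'_surjective C)
  have hle : R.map (QuotientGroup.mk' C) ≤ Rf := hRf.2.2 _ hRmapNormal hRmapIn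
  intro r hr
  exact hle (Subgroup.mem_map_of_mem _ hr)
end
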